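/- arXiv:1906.07754 — 3 statements merged into one kernel-verified Lean document; each statement's English description precedes it below -/
import Mathlib

section
/- Let n ≥ 1, let f : Fin n → ℕ with f i ≥ 1 for all i, and let Z ∈ ℕ. Then there exists a vector y : Fin n → ℕ with Σ_i y i · f i = Z if and only if there exists a closed walk T in the constructed path graph P starting and ending at v₁ such that w(T) ≥ W₁ and c(T) ≤ C. (Reduction correctness underlying the NP-hardness of the Constrained Least-cost Tour problem on a path.) -/
open SimpleGraph Finset

/-- The path graph on `n + 2` vertices `v₁, …, v_{n+2}` (indexed by `Fin (n+2)`),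
with edges `e_i = {v_i, v_{i+1}}`. -/
def pathG (n : ℕ) : SimpleGraph (Fin (n + 2)) :=
  SimpleGraph.fromRel (fun a b => (a : ℕ) + 1 = (b : ℕ))

/-- The edge `e_i = {v_i, v_{i+1}}` of the path graph, for `i ∈ [n+1]`. -/
def pedge (n : ℕ) (i : Fin (n + 1)) : Sym2 (Fin (n + 2)) := s(i.castSucc, i.succ)

/-- `φ(T, e_i)`: the number of times the walk `T` traverses the edge `e_i`. -/
def phi {n : ℕ} {u v : Fin (n + 2)} (T : (pathG n).Walk u v) (i : Fin (n + 1)) : ℕ :=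
  T.edges.count (pedge n i)

/-- Edge weights: `w(e_i) = f i` for `i ∈ [n]`, and `w(e_{n+1}) = (4Z + 4S)²`. -/
def wFun (n Z : ℕ) (f : Fin n → ℕ) (i : Fin (n + 1)) : ℕ :=
  if h : (i : ℕ) < n then f ⟨i, h⟩ else (4 * Z + 4 * ∑ j, f j) ^ 2

/-- Edge costs: `c(e_i) = f i` for `i ∈ [n]`, and `c(e_{n+1}) = Z + S`. -/
def cFun (n Z : ℕ) (f : Fin n → ℕ) (i : Fin (n + 1)) : ℕ :=
  if h : (i : ℕ) < n then f ⟨i, h⟩ else Z + ∑ j, f j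

/-- The total weight `w(T) = Σ_e φ(T,e)·w(e)` of a tour. -/
def wTour {n : ℕ} (Z : ℕ) (f : Fin n → ℕ) {u v : Fin (n + 2)} (T : (pathG n).Walk u v) : ℕ :=
  ∑ i, phi T i * wFun n Z f i

/-- The total cost `c(T) = Σ_e φ(T,e)·c(e)` of a tour. -/
def cTour {n : ℕ} (Z : ℕ) (f : Fin n → ℕ) {u v : Fin (n + 2)} (T : (pathG n).Walk u v) : ℕ :=
  ∑ i, phi T i * cFun n Z f i

/-- The cost threshold `C = 4Z + 4S`. -/
def Cthr (n Z : ℕ) (f : Fin n → ℕ) : ℕ := 4 * Z + 4 * ∑ j, f j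

/-- The lower weight threshold `W₁ = 2Z + 2(4Z+4S)² + 2S`. -/
def Wthr (n Z : ℕ) (f : Fin n → ℕ) : ℕ :=
  2 * Z + 2 * (4 * Z + 4 * ∑ j, f j) ^ 2 + 2 * ∑ j, f j


/-!
A closed walk on a path crosses every edge an even number of times, and whenever it crosses an
edge it crosses every edge between that one and its base point `v₁`. A solution `y` gives the
tour crossing `e_i` exactly `2 y i + 2` times and `e_{n+1}` twice; its weight is `W₁` and its
cost is `C`. Conversely, the weight bound forces a tour to cross the heavy edge `e_{n+1}`, hence
every edge at least twice, and then the cost bound lets it cross `e_{n+1}` only twice. Writing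
the remaining multiplicities as `2 y i + 2`, the weight and cost bounds say `Z ≤ ∑ y i * f i`
and `∑ y i * f i ≤ Z`.
-/

namespace pathG

variable {n : ℕ}

lemma adj_iff {a b : Fin (n + 2)} :
    (pathG n).Adj a b ↔ (a : ℕ) + 1 = b ∨ (b : ℕ) + 1 = a := by
  simp only [pathG, fromRel_adj, ne_eq, Fin.ext_iff]
  omega

lemma adj_castSucc_succ (i : Fin (n + 1)) : (pathG n).Adj i.castSucc i.succ :=
  adj_iff.2 (Or.inl (by simp))

end pathG

section Multiplicity

variable {n : ℕ}

lemma mk_eq_pedge_iff (a b : Fin (n + 2)) (i : Fin (n + 1)) :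
    s(a, b) = pedge n i ↔
      (a : ℕ) = i ∧ (b : ℕ) = i + 1 ∨ (a : ℕ) = i + 1 ∧ (b : ℕ) = i := by
  simp [pedge, Fin.ext_iff]

lemma pedge_injective : Function.Injective (pedge n) := by
  intro i j h
  have := (mk_eq_pedge_iff _ _ _).1 h
  simp only [Fin.val_castSucc, Fin.val_succ] at this
  omega

@[simp]
lemma phi_nil (u : Fin (n + 2)) (i : Fin (n + 1)) : phi (Walk.nil : (pathG n).Walk u u) i = 0 :=
  rfl

lemma phi_cons {u w v : Fin (n + 2)} (h : (pathG n).Adj u w) (q : (pathG n).Walk w v)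
    (i : Fin (n + 1)) : phi (q.cons h) i = phi q i + if s(u, w) = pedge n i then 1 else 0 := by
  simp [phi, List.count_cons]

@[simp]
lemma phi_append {u v w : Fin (n + 2)} (p : (pathG n).Walk u v) (q : (pathG n).Walk v w)
    (i : Fin (n + 1)) : phi (p.append q) i = phi p i + phi q i := by
  simp [phi, List.count_append]

@[simp]
lemma phi_reverse {u v : Fin (n + 2)} (p : (pathG n).Walk u v) (i : Fin (n + 1)) :
    phi p.reverse i = phi p i := by
  simp [phi]

lemma even_phi_iff {u v : Fin (n + 2)} (p : (pathG n).Walk u v) (i : Fin (n + 1)) :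
    Even (phi p i) ↔ ((u : ℕ) ≤ i ↔ (v : ℕ) ≤ i) := by
  induction p with
  | nil => simp
  | @cons a b c h q ih =>
    have hab := pathG.adj_iff.1 h
    rw [phi_cons]
    split_ifs with hi <;> rw [mk_eq_pedge_iff] at hi
    · rw [Nat.even_add_one, ih]
      omega
    · rw [add_zero, ih]
      omega

lemma even_phi {u : Fin (n + 2)} (p : (pathG n).Walk u u) (i : Fin (n + 1)) : Even (phi p i) :=
  (even_phi_iff p i).2 Iff.rfl

lemma phi_ne_zero_of_le {u v : Fin (n + 2)} (p : (pathG n).Walk u v) {i j : Fin (n + 1)}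
    (hu : (u : ℕ) ≤ i) (hij : i ≤ j) (hj : phi p j ≠ 0) : phi p i ≠ 0 := by
  induction p with
  | nil => simp at hj
  | @cons a b c h q ih =>
    have hab := pathG.adj_iff.1 h
    rw [Fin.le_iff_val_le_val] at hij
    rw [phi_cons] at hj ⊢
    by_cases hb : (b : ℕ) ≤ i
    · have := ih hb
      split_ifs at hj ⊢ <;> simp_all only [mk_eq_pedge_iff] <;> omega
    · rw [if_pos ((mk_eq_pedge_iff a b i).2 (by omega))]
      omega

end Multiplicity

section Construction

variable {n : ℕ}

def zigzag (i : Fin (n + 1)) : ℕ → (pathG n).Walk i.castSucc i.succ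
  | 0 => (pathG.adj_castSucc_succ i).toWalk
  | m + 1 =>
    .cons (pathG.adj_castSucc_succ i) (.cons (pathG.adj_castSucc_succ i).symm (zigzag i m))

lemma phi_zigzag (i : Fin (n + 1)) (m : ℕ) (j : Fin (n + 1)) :
    phi (zigzag i m) j = if j = i then 2 * m + 1 else 0 := by
  have hi : ∀ {a b : Fin (n + 2)}, s(a, b) = pedge n i → (s(a, b) = pedge n j ↔ j = i) :=
    fun h => h ▸ pedge_injective.eq_iff.trans eq_comm
  induction m with
  | zero => simp [zigzag, phi, List.count_cons, hi rfl]
  | succ m ih =>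
    simp only [zigzag, phi_cons, ih, hi rfl, hi Sym2.eq_swap]
    split_ifs <;> omega

def climb (g : Fin (n + 1) → ℕ) : (k : Fin (n + 2)) → (pathG n).Walk 0 k :=
  Fin.induction .nil fun i w => w.append (zigzag i (g i))

lemma phi_climb (g : Fin (n + 1) → ℕ) (k : Fin (n + 2)) (j : Fin (n + 1)) :
    phi (climb g k) j = if j.castSucc < k then 2 * g j + 1 else 0 := by
  induction k using Fin.induction with
  | zero => simp [climb]
  | succ i ih =>
    rw [climb, Fin.induction_succ, phi_append, ← climb, ih, phi_zigzag]
    by_cases hji : j = i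
    · simp [hji]
    · have : (j : ℕ) ≠ i := Fin.val_ne_iff.2 hji
      simp only [hji, if_false, Fin.lt_def, Fin.val_castSucc, Fin.val_succ]
      split_ifs <;> omega

theorem exists_walk_phi_eq (g : Fin (n + 1) → ℕ) :
    ∃ T : (pathG n).Walk 0 0, ∀ i, phi T i = 2 * g i + 2 :=
  ⟨(climb g (Fin.last _)).append (climb 0 (Fin.last _)).reverse, fun i => by
    simp [phi_climb, Fin.castSucc_lt_last]⟩

end Construction

section WeightAndCost

variable {n Z : ℕ} {f : Fin n → ℕ} {u v : Fin (n + 2)}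

lemma sum_mul_dite_val_lt (a : Fin (n + 1) → ℕ) (f : Fin n → ℕ) (c : ℕ) :
    ∑ i : Fin (n + 1), a i * (if h : (i : ℕ) < n then f ⟨i, h⟩ else c) =
      ∑ i : Fin n, a i.castSucc * f i + a (Fin.last n) * c := by
  simp [Fin.sum_univ_castSucc]

lemma wTour_eq (T : (pathG n).Walk u v) :
    wTour Z f T = ∑ i : Fin n, phi T i.castSucc * f i +
      phi T (Fin.last n) * (4 * Z + 4 * ∑ j, f j) ^ 2 :=
  sum_mul_dite_val_lt _ _ _

lemma cTour_eq (T : (pathG n).Walk u v) :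
    cTour Z f T = ∑ i : Fin n, phi T i.castSucc * f i + phi T (Fin.last n) * (Z + ∑ j, f j) :=
  sum_mul_dite_val_lt _ _ _

lemma sum_phi_mul_eq {T : (pathG n).Walk u v} {y : Fin n → ℕ}
    (hy : ∀ i, phi T i.castSucc = 2 * y i + 2) :
    ∑ i, phi T i.castSucc * f i = 2 * ∑ i, y i * f i + 2 * ∑ i, f i := by
  simp only [hy, mul_sum, ← sum_add_distrib]
  exact sum_congr rfl fun i _ => by ring

end WeightAndCost

theorem exists_sum_mul_eq_of_tour {n Z : ℕ} {f : Fin n → ℕ} (hS : 1 ≤ ∑ j, f j)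
    (T : (pathG n).Walk 0 0) (hW : Wthr n Z f ≤ wTour Z f T) (hC : cTour Z f T ≤ Cthr n Z f) :
    ∃ y : Fin n → ℕ, ∑ i, y i * f i = Z := by
  rw [wTour_eq, Wthr] at hW
  rw [cTour_eq, Cthr] at hC
  have hQ : 4 * Z + 4 * ∑ j, f j ≤ (4 * Z + 4 * ∑ j, f j) ^ 2 := Nat.le_self_pow two_ne_zero _
  have hlast_ne : phi T (Fin.last n) ≠ 0 := by
    intro h
    rw [h] at hW hC
    omega
  have htwo (i : Fin (n + 1)) : 2 ≤ phi T i := by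
    have := phi_ne_zero_of_le T (Nat.zero_le _) (Fin.le_last i) hlast_ne
    obtain ⟨k, hk⟩ := even_phi T i
    omega
  have hy (i : Fin n) : ∃ k, phi T i.castSucc = 2 * k + 2 := by
    obtain ⟨k, hk⟩ := even_phi T i.castSucc
    exact ⟨k - 1, by have := htwo i.castSucc; omega⟩
  choose y hy using hy
  rw [sum_phi_mul_eq hy] at hW hC
  have hlt : phi T (Fin.last n) < 4 :=
    Nat.lt_of_mul_lt_mul_right (a := Z + ∑ j, f j) (by omega)
  have hlast_eq : phi T (Fin.last n) = 2 := by
    obtain ⟨k, hk⟩ := even_phi T (Fin.last n)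
    omega
  rw [hlast_eq] at hW hC
  exact ⟨y, by omega⟩

/-- Reduction correctness underlying NP-hardness of CLT on a path:
the subset-sum instance has a solution iff the constructed CLT instance has a
weight-feasible tour of cost at most `C`. -/
theorem clt_reduction_correctness (n : ℕ) (hn : 1 ≤ n) (f : Fin n → ℕ)
    (hf : ∀ i, 1 ≤ f i) (Z : ℕ) :
    (∃ y : Fin n → ℕ, ∑ i, y i * f i = Z) ↔
      ∃ T : (pathG n).Walk 0 0,
        Wthr n Z f ≤ wTour Z f T ∧ cTour Z f T ≤ Cthr n Z f := by
  have hS : 1 ≤ ∑ j, f j := (hf ⟨0, hn⟩).trans (single_le_sum (by simp) (mem_univ _))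
  refine ⟨fun ⟨y, hZ⟩ => ?_, fun ⟨T, hW, hC⟩ => exists_sum_mul_eq_of_tour hS T hW hC⟩
  obtain ⟨T, hT⟩ := exists_walk_phi_eq (Fin.snoc y 0)
  have hy (i : Fin n) : phi T i.castSucc = 2 * y i + 2 := by simp [hT]
  have hlast : phi T (Fin.last n) = 2 := by simp [hT]
  refine ⟨T, ?_, ?_⟩
  · rw [wTour_eq, sum_phi_mul_eq hy, hlast, hZ, Wthr]
    omega
  · rw [cTour_eq, sum_phi_mul_eq hy, hlast, hZ, Cthr]
    omega
end

section
/- Let T be a closed walk in the constructed path graph P starting and ending at v₁ that does not traverse the edge e_{n+1} at all. If w(T) ≥ W₁, then c(T) > C. (Hence any weight-feasible, cost-feasible tour must traverse e_{n+1} at least twice.) -/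
open SimpleGraph Finset

theorem wFun_eq_cFun {n : ℕ} (Z : ℕ) (f : Fin n → ℕ) {i : Fin (n + 1)} (hi : (i : ℕ) < n) :
    wFun n Z f i = cFun n Z f i := by
  simp [wFun, cFun, hi]

theorem wTour_eq_cTour_of_phi_last_eq_zero {n : ℕ} (Z : ℕ) (f : Fin n → ℕ) {u v : Fin (n + 2)}
    {T : (pathG n).Walk u v} (hlast : phi T (Fin.last n) = 0) : wTour Z f T = cTour Z f T := by
  refine Finset.sum_congr rfl fun i _ => ?_
  rcases Fin.eq_castSucc_or_eq_last i with ⟨j, rfl⟩ | rfl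
  · rw [wFun_eq_cFun Z f (by simp)]
  · simp [hlast]

-- `W₁ ≥ 2C² > C` as soon as `C ≥ 1`.
theorem Cthr_lt_Wthr {n Z : ℕ} {f : Fin n → ℕ} (hC : 0 < Cthr n Z f) :
    Cthr n Z f < Wthr n Z f := by
  unfold Cthr at hC ⊢
  unfold Wthr
  nlinarith

/-- If a tour rooted at `v₁` never traverses the last edge `e_{n+1}` and has
`w(T) ≥ W₁`, then `c(T) > C`. -/
theorem avoid_last_edge_exceeds_cost (n : ℕ) (hn : 1 ≤ n) (f : Fin n → ℕ)
    (hf : ∀ i, 1 ≤ f i) (Z : ℕ) (T : (pathG n).Walk 0 0)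
    (hlast : phi T (Fin.last n) = 0) (hw : Wthr n Z f ≤ wTour Z f T) :
    Cthr n Z f < cTour Z f T := by
  have hS : 0 < ∑ j, f j := Finset.sum_pos (fun i _ => hf i) ⟨⟨0, hn⟩, Finset.mem_univ _⟩
  have hC : 0 < Cthr n Z f := by unfold Cthr; omega
  rw [← wTour_eq_cTour_of_phi_last_eq_zero Z f hlast]
  exact (Cthr_lt_Wthr hC).trans_le hw
end

section
/- Let T be a closed walk in the constructed path graph P starting and ending at v₁ that traverses the edge e_{n+1} at least four times. Then c(T) > C. (Hence any cost-feasible tour traverses e_{n+1} at most twice.) -/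
open SimpleGraph Finset

/-!
A nonempty walk from `v₁` must leave `v₁` along `e₁`, which costs `f 0 ≥ 1`; four traversals of
`e_{n+1}` already cost `4(Z + S) = C`, so together the cost exceeds `C`.
-/


lemma pathG_adj_zero {n : ℕ} {b : Fin (n + 2)} (h : (pathG n).Adj 0 b) : b = 1 := by
  obtain ⟨-, hb | hb⟩ := (fromRel_adj _ _ _).1 h
  · ext
    simp only [Fin.val_zero, Fin.val_one] at hb ⊢
    omega
  · simp at hb

lemma pedge_zero_mem_edges_of_mem {n : ℕ} {v : Fin (n + 2)} (T : (pathG n).Walk 0 v)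
    {e : Sym2 (Fin (n + 2))} (he : e ∈ T.edges) : pedge n 0 ∈ T.edges := by
  cases T with
  | nil => simp at he
  | cons h p =>
    obtain rfl := pathG_adj_zero h
    exact List.mem_cons_self ..

lemma phi_zero_pos_of_phi_pos {n : ℕ} {v : Fin (n + 2)} (T : (pathG n).Walk 0 v)
    {i : Fin (n + 1)} (hi : 0 < phi T i) : 0 < phi T 0 :=
  List.count_pos_iff.2 (pedge_zero_mem_edges_of_mem T (List.count_pos_iff.1 hi))

lemma cFun_castSucc (n Z : ℕ) (f : Fin n → ℕ) (i : Fin n) : cFun n Z f i.castSucc = f i := by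
  simp [cFun]

lemma cFun_last (n Z : ℕ) (f : Fin n → ℕ) : cFun n Z f (Fin.last n) = Z + ∑ j, f j := by
  simp [cFun]

lemma phi_mul_cFun_add_le_cTour {n Z : ℕ} (f : Fin n → ℕ) {u v : Fin (n + 2)}
    (T : (pathG n).Walk u v) {i j : Fin (n + 1)} (hij : i ≠ j) :
    phi T i * cFun n Z f i + phi T j * cFun n Z f j ≤ cTour Z f T :=
  Finset.add_le_sum (f := fun k => phi T k * cFun n Z f k) (fun _ _ => Nat.zero_le _)
    (mem_univ i) (mem_univ j) hij

/-- If a tour rooted at `v₁` traverses the last edge `e_{n+1}` at least four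
times, then `c(T) > C`. -/
theorem four_traversals_exceed_cost (n : ℕ) (hn : 1 ≤ n) (f : Fin n → ℕ)
    (hf : ∀ i, 1 ≤ f i) (Z : ℕ) (T : (pathG n).Walk 0 0)
    (hlast : 4 ≤ phi T (Fin.last n)) :
    Cthr n Z f < cTour Z f T := by
  let i₀ : Fin n := ⟨0, hn⟩
  have hfirst : 1 ≤ phi T i₀.castSucc := phi_zero_pos_of_phi_pos T (i := Fin.last n) (by omega)
  calc Cthr n Z f < 1 * 1 + 4 * (Z + ∑ j, f j) := by simp only [Cthr]; omega
    _ ≤ phi T i₀.castSucc * f i₀ + phi T (Fin.last n) * (Z + ∑ j, f j) := by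
      gcongr
      exact hf i₀
    _ ≤ cTour Z f T := by
      rw [← cFun_castSucc n Z f i₀, ← cFun_last n Z f]
      exact phi_mul_cFun_add_le_cTour f T (Fin.castSucc_lt_last i₀).ne
end
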